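/- arXiv:0804.3817 — 5 statements merged into one kernel-verified Lean document; each statement's English description precedes it below -/
import Mathlib

section
/- Let f : {−1,1}^n → {−1,1} be a non-constant function and let s, t be positive integers with s·t ≥ deg(f). Let r_1, …, r_t ∈ (−1,1) be pairwise distinct. Then there exist an index i ∈ {1,…,t} and a set S ⊆ [n] with 1 ≤ |S| ≤ s such that the r_i-biased Fourier coefficient f̂(S, r_i) is nonzero. -/
open Finset

noncomputable section

/-- ±1 encoding of a Boolean. -/
def pmVal (b : Bool) : ℝ := if b then 1 else -1

/-- Probability weight of the point `x` of the cube under the product measure with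
bias vector `r` (coordinate `i` equals `1` with probability `(1 + r i)/2`). -/
def cubeWt {n : ℕ} (r : Fin n → ℝ) (x : Fin n → Bool) : ℝ :=
  ∏ i, (1 + r i * pmVal (x i)) / 2

/-- Expectation of `f : {-1,1}^n → ℝ` under the product measure with bias vector `r`. -/
def biasedExp {n : ℕ} (r : Fin n → ℝ) (f : (Fin n → Bool) → ℝ) : ℝ :=
  ∑ x : Fin n → Bool, cubeWt r x * f x

/-- The biased character `χ_S(x, r) = ∏_{i ∈ S} (x_i - r_i)/√(1 - r_i²)`. -/
def biasedChi {n : ℕ} (r : Fin n → ℝ) (S : Finset (Fin n)) (x : Fin n → Bool) : ℝ :=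
  ∏ i ∈ S, (pmVal (x i) - r i) / Real.sqrt (1 - (r i) ^ 2)

/-- Biased Fourier coefficient `f̂(S, r) = E_r[f · χ_S(·, r)]`. -/
def biasedFourier {n : ℕ} (r : Fin n → ℝ) (f : (Fin n → Bool) → ℝ) (S : Finset (Fin n)) : ℝ :=
  biasedExp r (fun x => f x * biasedChi r S x)

/-- Weight of the `s`-th Fourier level: `w_s(f, r) = Σ_{|S| = s} f̂(S, r)`. -/
def levelWeight {n : ℕ} (r : Fin n → ℝ) (f : (Fin n → Bool) → ℝ) (s : ℕ) : ℝ :=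
  ∑ S ∈ univ.filter (fun S : Finset (Fin n) => S.card = s), biasedFourier r f S

open Classical in
/-- Degree of `f`: the largest `|S|` with `f̂(S, 0) ≠ 0`. -/
def fourierDeg {n : ℕ} (f : (Fin n → Bool) → ℝ) : ℕ :=
  (univ.filter (fun S : Finset (Fin n) => biasedFourier (fun _ => (0 : ℝ)) f S ≠ 0)).sup
    Finset.card

/-! Write `c_T = f̂(T, 0)` and `Q(ρ) = ∑_T c_T ρ^|T|` (this is `E_ρ[f]`). Computing the
`ρ`-biased coefficients of each character `χ_T(·, 0)` gives
`k! ∑_{|S| = k} f̂(S, ρ) = σ^k Q⁽ᵏ⁾(ρ)`. If all coefficients of levels `1, …, s` vanish at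
`r_1, …, r_t`, then `Q'` has a root of multiplicity `≥ s` at each `r_i` while
`deg Q' < deg f ≤ s t`, so `Q` is constant. But then `f(1, …, 1) = Q(1) = Q(0) = E_0[f]`,
which is impossible for a non-constant `±1`-valued `f`. -/

lemma biasedExp_prod {n : ℕ} (r : Fin n → ℝ) (g : Fin n → Bool → ℝ) :
    biasedExp r (fun x => ∏ i, g i (x i)) = ∏ i, ∑ b, (1 + r i * pmVal b) / 2 * g i b := by
  rw [Fintype.prod_sum]
  exact Finset.sum_congr rfl fun x _ => (Finset.prod_mul_distrib).symm

lemma sum_bool_bias_weight (ρ : ℝ) : ∑ b, (1 + ρ * pmVal b) / 2 = 1 := by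
  simp only [Fintype.sum_bool, pmVal, ↓reduceIte, Bool.false_eq_true]; ring

lemma sum_bool_bias_weight_mul_pmVal (ρ : ℝ) : ∑ b, (1 + ρ * pmVal b) / 2 * pmVal b = ρ := by
  simp only [Fintype.sum_bool, pmVal, ↓reduceIte, Bool.false_eq_true]; ring

lemma sum_bool_bias_weight_mul_chi (ρ : ℝ) :
    ∑ b, (1 + ρ * pmVal b) / 2 * ((pmVal b - ρ) / √(1 - ρ ^ 2)) = 0 := by
  simp only [Fintype.sum_bool, pmVal, ↓reduceIte, Bool.false_eq_true]; ring

lemma sum_bool_bias_weight_mul_pmVal_mul_chi {ρ : ℝ} (hρ : ρ ∈ Set.Ioo (-1 : ℝ) 1) :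
    ∑ b, (1 + ρ * pmVal b) / 2 * (pmVal b * ((pmVal b - ρ) / √(1 - ρ ^ 2))) = √(1 - ρ ^ 2) := by
  have hpos : 0 < 1 - ρ ^ 2 := by nlinarith [hρ.1, hρ.2]
  have hsq := Real.sq_sqrt hpos.le
  have hne := (Real.sqrt_pos.mpr hpos).ne'
  simp only [Fintype.sum_bool, pmVal, ↓reduceIte, Bool.false_eq_true]
  field_simp; linear_combination -2 * hsq

def walsh {n : ℕ} (T : Finset (Fin n)) (x : Fin n → Bool) : ℝ := ∏ i ∈ T, pmVal (x i)

lemma biasedFourier_walsh {n : ℕ} {r : Fin n → ℝ} (hr : ∀ i, r i ∈ Set.Ioo (-1 : ℝ) 1)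
    (T S : Finset (Fin n)) :
    biasedFourier r (walsh T) S =
      if S ⊆ T then (∏ i ∈ S, √(1 - r i ^ 2)) * ∏ i ∈ T \ S, r i else 0 := by
  have hsplit : ∀ x : Fin n → Bool, walsh T x * biasedChi r S x =
      ∏ i, (if i ∈ T then pmVal (x i) else 1) *
        (if i ∈ S then (pmVal (x i) - r i) / √(1 - r i ^ 2) else 1) := fun x => by
    rw [Finset.prod_mul_distrib, Fintype.prod_ite_mem, Fintype.prod_ite_mem, walsh, biasedChi]
  rw [biasedFourier, funext hsplit, biasedExp_prod r fun i b => (if i ∈ T then pmVal b else 1) *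
    (if i ∈ S then (pmVal b - r i) / √(1 - r i ^ 2) else 1)]
  have hcoord : ∀ i, ∑ b, (1 + r i * pmVal b) / 2 * ((if i ∈ T then pmVal b else 1) *
      (if i ∈ S then (pmVal b - r i) / √(1 - r i ^ 2) else 1)) =
      if i ∈ S then (if i ∈ T then √(1 - r i ^ 2) else 0) else (if i ∈ T then r i else 1) := by
    intro i
    by_cases hS : i ∈ S <;> by_cases hT : i ∈ T <;> simp only [hS, hT, if_true, if_false, mul_one,
      one_mul, sum_bool_bias_weight, sum_bool_bias_weight_mul_pmVal, sum_bool_bias_weight_mul_chi,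
      sum_bool_bias_weight_mul_pmVal_mul_chi (hr i)]
  simp only [hcoord]
  split_ifs with hST
  · rw [← Fintype.prod_ite_mem S, ← Fintype.prod_ite_mem (T \ S), ← Finset.prod_mul_distrib]
    refine Finset.prod_congr rfl fun i _ => ?_
    by_cases hS : i ∈ S
    · simp [hS, hST hS]
    · by_cases hT : i ∈ T <;> simp [hS, hT]
  · obtain ⟨j, hjS, hjT⟩ := Finset.not_subset.mp hST
    exact Finset.prod_eq_zero (Finset.mem_univ j) (by simp [hjS, hjT])

lemma biasedFourier_zero {n : ℕ} (f : (Fin n → Bool) → ℝ) (T : Finset (Fin n)) :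
    biasedFourier (fun _ => 0) f T = (∑ x, f x * walsh T x) / 2 ^ n := by
  simp [biasedFourier, biasedExp, cubeWt, biasedChi, walsh, div_eq_inv_mul, Finset.mul_sum]

lemma one_add_pmVal_mul_pmVal (a b : Bool) : 1 + pmVal a * pmVal b = if a = b then 2 else 0 := by
  cases a <;> cases b <;> norm_num [pmVal]

lemma sum_walsh_mul_walsh {n : ℕ} (x y : Fin n → Bool) :
    ∑ T, walsh T x * walsh T y = if x = y then 2 ^ n else 0 := by
  simp only [walsh, ← Finset.prod_mul_distrib]
  rw [← Finset.powerset_univ, ← Finset.prod_one_add]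
  simp [one_add_pmVal_mul_pmVal, Finset.prod_ite_zero, funext_iff]

lemma sum_biasedFourier_zero_mul_walsh {n : ℕ} (f : (Fin n → Bool) → ℝ) (y : Fin n → Bool) :
    ∑ T, biasedFourier (fun _ => 0) f T * walsh T y = f y := by
  calc ∑ T, biasedFourier (fun _ => 0) f T * walsh T y
      = (∑ x, f x * ∑ T, walsh T x * walsh T y) / 2 ^ n := by
        simp only [biasedFourier_zero, Finset.mul_sum, Finset.sum_div, Finset.sum_mul]
        rw [Finset.sum_comm]
        exact Finset.sum_congr rfl fun _ _ => Finset.sum_congr rfl fun _ _ => by ring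
    _ = f y := by simp [sum_walsh_mul_walsh]

lemma biasedFourier_sum_mul {n : ℕ} {ι : Type*} [Fintype ι] (r : Fin n → ℝ) (c : ι → ℝ)
    (g : ι → (Fin n → Bool) → ℝ) (S : Finset (Fin n)) :
    biasedFourier r (fun x => ∑ j, c j * g j x) S = ∑ j, c j * biasedFourier r (g j) S := by
  simp only [biasedFourier, biasedExp, Finset.sum_mul, Finset.mul_sum]
  rw [Finset.sum_comm]
  exact Finset.sum_congr rfl fun _ _ => Finset.sum_congr rfl fun _ _ => by ring

lemma biasedFourier_eq_sum_walsh {n : ℕ} (r : Fin n → ℝ) (f : (Fin n → Bool) → ℝ)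
    (S : Finset (Fin n)) :
    biasedFourier r f S = ∑ T, biasedFourier (fun _ => 0) f T * biasedFourier r (walsh T) S := by
  conv_lhs => rw [← funext (sum_biasedFourier_zero_mul_walsh f)]
  exact biasedFourier_sum_mul r _ _ S

lemma levelWeight_walsh {n : ℕ} {ρ : ℝ} (hρ : ρ ∈ Set.Ioo (-1 : ℝ) 1) (T : Finset (Fin n))
    (k : ℕ) :
    levelWeight (fun _ => ρ) (walsh T) k =
      T.card.choose k * (√(1 - ρ ^ 2) ^ k * ρ ^ (T.card - k)) := by
  have hterm : ∀ S ∈ univ.filter (fun S : Finset (Fin n) => S.card = k),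
      biasedFourier (fun _ => ρ) (walsh T) S =
        if S ⊆ T then √(1 - ρ ^ 2) ^ k * ρ ^ (T.card - k) else 0 := by
    intro S hS
    rw [Finset.mem_filter] at hS
    rw [biasedFourier_walsh fun _ => hρ]
    split_ifs with hST
    · rw [Finset.prod_const, Finset.prod_const, Finset.card_sdiff_of_subset hST, hS.2]
    · rfl
  have hcount : (univ.filter (fun S : Finset (Fin n) => S.card = k)).filter (· ⊆ T) =
      T.powersetCard k := by
    ext S; simp [Finset.mem_powersetCard, and_comm]
  rw [levelWeight, Finset.sum_congr rfl hterm, Finset.sum_ite, Finset.sum_const_zero, add_zero,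
    Finset.sum_const, nsmul_eq_mul, hcount, Finset.card_powersetCard]

lemma levelWeight_eq_sum {n : ℕ} {ρ : ℝ} (hρ : ρ ∈ Set.Ioo (-1 : ℝ) 1)
    (f : (Fin n → Bool) → ℝ) (k : ℕ) :
    levelWeight (fun _ => ρ) f k = √(1 - ρ ^ 2) ^ k *
      ∑ T, biasedFourier (fun _ => 0) f T * T.card.choose k * ρ ^ (T.card - k) := by
  have hlin : levelWeight (fun _ => ρ) f k =
      ∑ T, biasedFourier (fun _ => 0) f T * levelWeight (fun _ => ρ) (walsh T) k := by
    rw [levelWeight, Finset.sum_congr rfl fun S _ => biasedFourier_eq_sum_walsh _ f S,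
      Finset.sum_comm]
    simp only [levelWeight, Finset.mul_sum]
  rw [hlin, Finset.mul_sum]
  exact Finset.sum_congr rfl fun T _ => by rw [levelWeight_walsh hρ]; ring

open Polynomial

lemma natDegree_eq_zero_of_iterate_derivative_eval_eq_zero {K : Type*} [Field K] [CharZero K]
    {p : K[X]} {s t : ℕ} {r : Fin t → K} (hr : Function.Injective r)
    (hdeg : p.natDegree ≤ s * t)
    (hroots : ∀ i k, 1 ≤ k → k ≤ s → (derivative^[k] p).eval (r i) = 0) :
    p.natDegree = 0 := by
  by_contra hp
  obtain _ | s := s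
  · exact hp (by simpa using hdeg)
  have hp' : derivative p ≠ 0 := derivative_ne_zero.mpr hp
  have hdvd : ∀ i, (X - C (r i)) ^ (s + 1) ∣ derivative p := fun i =>
    (le_rootMultiplicity_iff hp').mp <| lt_rootMultiplicity_of_isRoot_iterate_derivative hp'
      fun m hm => by
        rw [← Function.iterate_succ_apply]
        exact hroots i (m + 1) (by omega) (by omega)
  have hprod : ∏ i, (X - C (r i)) ^ (s + 1) ∣ derivative p :=
    Fintype.prod_dvd_of_coprime (fun i j hij => ((pairwise_coprime_X_sub_C hr) hij).pow) hdvd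
  have hprod_deg : (∏ i, (X - C (r i)) ^ (s + 1)).natDegree = t * (s + 1) := by
    rw [natDegree_prod_of_monic _ _ fun i _ => (monic_X_sub_C (r i)).pow _]
    simp
  have := natDegree_le_of_dvd hprod hp'
  have := natDegree_derivative_lt hp
  rw [mul_comm] at hdeg
  omega

lemma sum_ne_card_mul_of_pm_one {α : Type*} [Fintype α] {f : α → ℝ}
    (hpm : ∀ x, f x = 1 ∨ f x = -1) (hnc : ∃ x y, f x ≠ f y) (z : α) :
    ∑ x, f x ≠ Fintype.card α * f z := by
  intro hsum
  have hz : f z * f z = 1 := by rcases hpm z with h | h <;> rw [h] <;> norm_num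
  have hnonneg : ∀ x ∈ univ, 0 ≤ 1 - f z * f x := fun x _ => by
    rcases hpm z with h | h <;> rcases hpm x with h' | h' <;> rw [h, h'] <;> norm_num
  have hzero : ∑ x, (1 - f z * f x) = 0 := by
    rw [Finset.sum_sub_distrib, ← Finset.mul_sum, hsum, Finset.sum_const, Finset.card_univ,
      nsmul_eq_mul, mul_one, mul_left_comm, hz, mul_one, sub_self]
  have hconst : ∀ x, f x = f z := fun x => by
    have := (Finset.sum_eq_zero_iff_of_nonneg hnonneg).mp hzero x (Finset.mem_univ x)
    calc f x = f z * f z * f x := by rw [hz, one_mul]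
      _ = f z := by linear_combination (-f z) * this
  obtain ⟨x, y, hxy⟩ := hnc
  exact hxy ((hconst x).trans (hconst y).symm)

def fourierPoly {n : ℕ} (f : (Fin n → Bool) → ℝ) : ℝ[X] :=
  ∑ T, C (biasedFourier (fun _ => 0) f T) * X ^ T.card

lemma eval_iterate_derivative_fourierPoly {n : ℕ} (f : (Fin n → Bool) → ℝ) (k : ℕ) (ρ : ℝ) :
    (derivative^[k] (fourierPoly f)).eval ρ =
      k.factorial * ∑ T, biasedFourier (fun _ => 0) f T * T.card.choose k * ρ ^ (T.card - k) := by
  simp only [fourierPoly, iterate_derivative_sum, iterate_derivative_C_mul,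
    iterate_derivative_X_pow_eq_natCast_mul, eval_finsetSum, Finset.mul_sum]
  refine Finset.sum_congr rfl fun T _ => ?_
  simp only [Nat.descFactorial_eq_factorial_mul_choose, Nat.cast_mul, eval_mul, eval_C,
    eval_natCast, eval_pow, eval_X]
  ring

lemma factorial_mul_levelWeight {n : ℕ} {ρ : ℝ} (hρ : ρ ∈ Set.Ioo (-1 : ℝ) 1)
    (f : (Fin n → Bool) → ℝ) (k : ℕ) :
    k.factorial * levelWeight (fun _ => ρ) f k =
      √(1 - ρ ^ 2) ^ k * (derivative^[k] (fourierPoly f)).eval ρ := by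
  rw [levelWeight_eq_sum hρ, eval_iterate_derivative_fourierPoly]
  ring

lemma natDegree_fourierPoly_le {n : ℕ} (f : (Fin n → Bool) → ℝ) :
    (fourierPoly f).natDegree ≤ fourierDeg f := by
  classical
  refine natDegree_sum_le_of_forall_le _ _ fun T _ => ?_
  by_cases hT : biasedFourier (fun _ => 0) f T = 0
  · simp [hT]
  · exact (natDegree_C_mul_X_pow_le _ _).trans
      (Finset.le_sup (f := Finset.card) (Finset.mem_filter.mpr ⟨Finset.mem_univ T, hT⟩))

lemma eval_one_fourierPoly {n : ℕ} (f : (Fin n → Bool) → ℝ) :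
    (fourierPoly f).eval 1 = f (fun _ => true) := by
  rw [← sum_biasedFourier_zero_mul_walsh f]
  simp [fourierPoly, eval_finsetSum, walsh, pmVal]

lemma eval_zero_fourierPoly {n : ℕ} (f : (Fin n → Bool) → ℝ) :
    (fourierPoly f).eval 0 = (∑ x, f x) / 2 ^ n := by
  rw [fourierPoly, eval_finsetSum, Finset.sum_eq_single ∅ (fun T _ hT => by simp [hT])
    (by simp)]
  simp [biasedFourier_zero, walsh]

theorem stmt0_general {n : ℕ} (f : (Fin n → Bool) → ℝ)
    (hpm : ∀ x, f x = 1 ∨ f x = -1)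
    (hnc : ∃ x y, f x ≠ f y)
    (s t : ℕ) (hst : fourierDeg f ≤ s * t)
    (r : Fin t → ℝ) (hr : ∀ i, r i ∈ Set.Ioo (-1 : ℝ) 1)
    (hinj : Function.Injective r) :
    ∃ (i : Fin t) (S : Finset (Fin n)), 1 ≤ S.card ∧ S.card ≤ s ∧
      biasedFourier (fun _ => r i) f S ≠ 0 := by
  by_contra! hzero
  have hroots : ∀ i k, 1 ≤ k → k ≤ s → (derivative^[k] (fourierPoly f)).eval (r i) = 0 := by
    intro i k hk hks
    have hlevel : levelWeight (fun _ => r i) f k = 0 := Finset.sum_eq_zero fun S hS =>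
      hzero i S (by simp_all) (by simp_all)
    have hσ : √(1 - r i ^ 2) ≠ 0 :=
      (Real.sqrt_pos.mpr (by nlinarith [(hr i).1, (hr i).2])).ne'
    simpa [hlevel, hσ] using (factorial_mul_levelWeight (hr i) f k).symm
  have hconst := natDegree_eq_zero_of_iterate_derivative_eval_eq_zero hinj
    ((natDegree_fourierPoly_le f).trans hst) hroots
  have heval : (fourierPoly f).eval 1 = (fourierPoly f).eval 0 := by
    rw [eq_C_of_natDegree_eq_zero hconst, eval_C, eval_C]
  rw [eval_one_fourierPoly, eval_zero_fourierPoly, eq_div_iff (by positivity)] at heval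
  refine sum_ne_card_mul_of_pm_one hpm hnc (fun _ => true) ?_
  simpa [mul_comm] using heval.symm

/-- If `f : {-1,1}^n → {-1,1}` is non-constant and `s·t ≥ deg(f)` with
`s, t ≥ 1`, and `r_1, …, r_t ∈ (-1,1)` are pairwise distinct biases, then there are `i`
and `S` with `1 ≤ |S| ≤ s` and `f̂(S, r_i) ≠ 0`. -/
theorem stmt0 {n : ℕ} (f : (Fin n → Bool) → ℝ)
    (hpm : ∀ x, f x = 1 ∨ f x = -1)
    (hnc : ∃ x y, f x ≠ f y)
    (s t : ℕ) (hs : 0 < s) (ht : 0 < t) (hst : fourierDeg f ≤ s * t)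
    (r : Fin t → ℝ) (hr : ∀ i, r i ∈ Set.Ioo (-1 : ℝ) 1)
    (hinj : Function.Injective r) :
    ∃ (i : Fin t) (S : Finset (Fin n)), 1 ≤ S.card ∧ S.card ≤ s ∧
      biasedFourier (fun _ => r i) f S ≠ 0 :=
  stmt0_general f hpm hnc s t hst r hr hinj
end
end

section
/- Let f : {−1,1}^n → ℝ, let s ∈ {1,…,n}, and let r_* ∈ (−1,1). The map r ↦ E_r[f] on (−1,1) extends to a polynomial in r, and its s-th derivative at r = r_* equals s!·(1−r_*²)^{−s/2}·w_s(f, r_*). -/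
open Finset

noncomputable section

/-!
The density of `μ_t` with respect to `μ_r` factors over the coordinates, and in coordinate `i`
it equals `1 + δ · (x_i - r)/σ` with `δ = (t - r)/σ`. Expanding the product over coordinates
writes it as `Σ_S δ^{|S|} χ_S(x, r)`, so `E_t[f] = Σ_S f̂(S, r) · ((t - r)/σ)^{|S|}`: this is the
Taylor expansion of `t ↦ E_t[f]` at `r`, and its coefficient of `(t - r)^s` is `w_s(f, r)/σ^s`.
-/

lemma one_add_mul_pmVal_div_two_eq {r : ℝ} (hr : r ∈ Set.Ioo (-1 : ℝ) 1) (t : ℝ) (b : Bool) :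
    (1 + t * pmVal b) / 2 = (1 + r * pmVal b) / 2 *
      (1 + (t - r) / Real.sqrt (1 - r ^ 2) * ((pmVal b - r) / Real.sqrt (1 - r ^ 2))) := by
  have hpos : 0 < 1 - r ^ 2 := by nlinarith [hr.1, hr.2]
  rw [div_mul_div_comm, Real.mul_self_sqrt hpos.le]
  cases b <;> simp only [pmVal, Bool.false_eq_true, if_true, if_false] <;> field_simp <;> ring

lemma cubeWt_eq_mul_sum_biasedChi {n : ℕ} {r : Fin n → ℝ} (hr : ∀ i, r i ∈ Set.Ioo (-1 : ℝ) 1)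
    (t : Fin n → ℝ) (x : Fin n → Bool) :
    cubeWt t x = cubeWt r x * ∑ S : Finset (Fin n),
      (∏ i ∈ S, (t i - r i) / Real.sqrt (1 - r i ^ 2)) * biasedChi r S x := by
  simp only [cubeWt, biasedChi, ← prod_mul_distrib]
  rw [← powerset_univ, ← prod_one_add, ← prod_mul_distrib]
  exact prod_congr rfl fun i _ => one_add_mul_pmVal_div_two_eq (hr i) (t i) (x i)

lemma biasedExp_eq_sum_biasedFourier {n : ℕ} {r : Fin n → ℝ}
    (hr : ∀ i, r i ∈ Set.Ioo (-1 : ℝ) 1) (t : Fin n → ℝ) (f : (Fin n → Bool) → ℝ) :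
    biasedExp t f = ∑ S : Finset (Fin n),
      (∏ i ∈ S, (t i - r i) / Real.sqrt (1 - r i ^ 2)) * biasedFourier r f S := by
  simp only [biasedFourier, biasedExp, cubeWt_eq_mul_sum_biasedChi hr t, mul_sum, sum_mul]
  rw [sum_comm]
  exact sum_congr rfl fun S _ => sum_congr rfl fun x _ => by ring

lemma iteratedDeriv_sub_const_pow_self {𝕜 : Type*} [NontriviallyNormedField 𝕜] (a : 𝕜)
    (k s : ℕ) :
    iteratedDeriv s (fun t => (t - a) ^ k) a = if s = k then (k.factorial : 𝕜) else 0 := by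
  rw [iteratedDeriv_comp_sub_const s (· ^ k) a]
  beta_reduce
  rw [sub_self, iteratedDeriv_fun_pow_zero, Nat.cast_ite, Nat.cast_zero]

lemma iteratedDeriv_sum_mul_sub_pow_self {𝕜 ι : Type*} [NontriviallyNormedField 𝕜]
    (I : Finset ι) (c : ι → 𝕜) (d : ι → ℕ) (a : 𝕜) (s : ℕ) :
    iteratedDeriv s (fun t => ∑ i ∈ I, c i * (t - a) ^ d i) a
      = s.factorial * ∑ i ∈ I with d i = s, c i := by
  rw [iteratedDeriv_fun_sum fun i _ => by fun_prop, sum_filter, mul_sum]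
  refine sum_congr rfl fun i _ => ?_
  rw [iteratedDeriv_const_mul_field, iteratedDeriv_sub_const_pow_self]
  by_cases h : d i = s
  · simp [h, mul_comm]
  · simp [h, Ne.symm h]

theorem stmt1_general {n : ℕ} (f : (Fin n → Bool) → ℝ) (s : ℕ)
    (rstar : ℝ) (hr : rstar ∈ Set.Ioo (-1 : ℝ) 1) :
    iteratedDeriv s (fun r : ℝ => biasedExp (fun _ : Fin n => r) f) rstar
      = (s.factorial : ℝ) / (Real.sqrt (1 - rstar ^ 2)) ^ s
          * levelWeight (fun _ => rstar) f s := by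
  set σ := Real.sqrt (1 - rstar ^ 2)
  have htaylor : (fun r : ℝ => biasedExp (fun _ : Fin n => r) f) = fun r =>
      ∑ S : Finset (Fin n),
        biasedFourier (fun _ => rstar) f S / σ ^ S.card * (r - rstar) ^ S.card := by
    funext r
    rw [biasedExp_eq_sum_biasedFourier fun _ => hr]
    exact sum_congr rfl fun S _ => by rw [prod_const, div_pow]; ring
  rw [htaylor, iteratedDeriv_sum_mul_sub_pow_self, levelWeight, mul_sum, mul_sum]
  refine sum_congr rfl fun S hS => ?_
  rw [(mem_filter.1 hS).2]
  ring

/-- generalized Russo formula, equal biases. For `f : {-1,1}^n → ℝ`,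
`1 ≤ s ≤ n`, and `r_* ∈ (-1,1)`, the `s`-th derivative of `r ↦ E_r[f]` at `r_*` equals
`s! · (1 - r_*²)^{-s/2} · w_s(f, r_*)`. -/
theorem stmt1 {n : ℕ} (f : (Fin n → Bool) → ℝ) (s : ℕ) (hs : 1 ≤ s) (hsn : s ≤ n)
    (rstar : ℝ) (hr : rstar ∈ Set.Ioo (-1 : ℝ) 1) :
    iteratedDeriv s (fun r : ℝ => biasedExp (fun _ : Fin n => r) f) rstar
      = (s.factorial : ℝ) / (Real.sqrt (1 - rstar ^ 2)) ^ s
          * levelWeight (fun _ => rstar) f s :=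
  stmt1_general f s rstar hr

end
end

section
/- Let g ∈ ℝ[t_1,…,t_n] be a multilinear polynomial (every variable occurs with exponent at most one) and define h ∈ ℝ[t] by h(t) = g(t,…,t). Then for every k and every t ∈ ℝ: d^k/dt^k h(t) = k! · Σ_{S⊆[n], |S|=k} (∂^k/∂t_S) g(t,…,t), where ∂^k/∂t_S denotes the partial derivative taken once in each variable t_i with i ∈ S. -/
open Finset

noncomputable section

/-- The iterated partial derivative of a multivariate polynomial, taken once in each
variable indexed by `S` (applied in increasing order of indices; partial derivatives
commute, so the order is immaterial). -/
def pderivFinset {n : ℕ} (S : Finset (Fin n)) (g : MvPolynomial (Fin n) ℝ) :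
    MvPolynomial (Fin n) ℝ :=
  (S.sort (· ≤ ·)).foldl (fun p i => MvPolynomial.pderiv i p) g

/-!
Both sides are linear in `g`, so it suffices to treat a multilinear monomial `c ∏_{i ∈ A} t_i`.
On the diagonal it becomes `c t^|A|`, whose `k`-th derivative is
`c · |A|!/(|A|-k)! · t^(|A|-k)`. On the other side `∂_S` kills the monomial unless `S ⊆ A`, and
otherwise leaves `c ∏_{i ∈ A \ S} t_i`, which is `c t^(|A|-k)` on the diagonal; there are
`choose |A| k` such `S`, and `k! · choose |A| k = |A|!/(|A|-k)!`.
-/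
theorem Polynomial.iteratedDeriv_eval {𝕜 : Type*} [NontriviallyNormedField 𝕜] (p : Polynomial 𝕜)
    (k : ℕ) : iteratedDeriv k (fun x => p.eval x) = fun x => (derivative^[k] p).eval x := by
  induction k generalizing p with
  | zero => rfl
  | succ k ih =>
    have hderiv : _root_.deriv (fun x => p.eval x) = fun x => p.derivative.eval x :=
      _root_.funext fun _ => p.deriv
    rw [iteratedDeriv_succ', hderiv, ih, Function.iterate_succ_apply]

theorem Multiset.toFinsupp_val_apply {α : Type*} [DecidableEq α] (A : Finset α) (i : α) :
    A.val.toFinsupp i = if i ∈ A then 1 else 0 := by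
  simp only [Multiset.toFinsupp_apply, Multiset.count_eq_of_nodup A.nodup, Finset.mem_val]

theorem Multiset.toFinsupp_erase_val {α : Type*} [DecidableEq α] {A : Finset α} {i : α}
    (hi : i ∈ A) : (A.erase i).val.toFinsupp = A.val.toFinsupp - Finsupp.single i 1 := by
  conv_rhs => rw [← Finset.insert_erase hi, Finset.insert_val_of_notMem (notMem_erase i A),
    ← Multiset.singleton_add, toFinsupp_add, toFinsupp_singleton, add_tsub_cancel_left]

theorem Finsupp.eq_toFinsupp_support_val {α : Type*} [DecidableEq α] {m : α →₀ ℕ}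
    (hm : ∀ i, m i ≤ 1) : m = m.support.val.toFinsupp := by
  ext i
  have hmi := hm i
  rw [Multiset.toFinsupp_val_apply]
  split_ifs with hi <;> rw [Finsupp.mem_support_iff] at hi <;> omega

namespace MvPolynomial

variable {R σ : Type*} [CommSemiring R]

theorem foldl_pderiv_eq_prod (l : List σ) (p : MvPolynomial σ R) :
    l.foldl (fun q i => pderiv i q) p
      = (l.reverse.map fun i => ((pderiv i).toLinearMap : Module.End R (MvPolynomial σ R))).prod
          p := by
  induction l generalizing p with
  | nil => rfl
  | cons i l ih => simp [ih]

theorem polynomial_eval_aeval_const_X (p : MvPolynomial σ R) (u : R) :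
    (aeval (fun _ => (Polynomial.X : Polynomial R)) p).eval u = eval (fun _ => u) p := by
  rw [← Polynomial.coe_aeval_eq_eval, comp_aeval_apply]
  simp

variable [DecidableEq σ]

theorem pderiv_monomial_toFinsupp_val (A : Finset σ) (i : σ) (c : R) :
    pderiv i (monomial A.val.toFinsupp c)
      = if i ∈ A then monomial (A.erase i).val.toFinsupp c else 0 := by
  rw [pderiv_monomial, Multiset.toFinsupp_val_apply]
  split_ifs with hi
  · rw [Multiset.toFinsupp_erase_val hi, Nat.cast_one, mul_one]
  · rw [Nat.cast_zero, mul_zero, monomial_zero]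

theorem foldl_pderiv_monomial_toFinsupp_val (A : Finset σ) (c : R) {l : List σ} (hl : l.Nodup) :
    l.foldl (fun q i => pderiv i q) (monomial A.val.toFinsupp c)
      = if l.toFinset ⊆ A then monomial (A \ l.toFinset).val.toFinsupp c else 0 := by
  induction l generalizing A with
  | nil => simp
  | cons i l ih =>
    obtain ⟨hil, hl⟩ := List.nodup_cons.mp hl
    rw [List.foldl_cons, pderiv_monomial_toFinsupp_val]
    by_cases hiA : i ∈ A
    · have hsub : l.toFinset ⊆ A.erase i ↔ (i :: l).toFinset ⊆ A := by
        rw [List.toFinset_cons, Finset.insert_subset_iff, Finset.subset_erase]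
        simp [hiA, hil]
      rw [if_pos hiA, ih _ hl, List.toFinset_cons, Finset.erase_sdiff_comm, ← Finset.sdiff_insert,
        ← List.toFinset_cons]
      exact if_congr hsub rfl rfl
    · rw [if_neg hiA, foldl_pderiv_eq_prod, map_zero, if_neg]
      simp [Finset.insert_subset_iff, hiA]

theorem aeval_const_X_monomial_toFinsupp_val (A : Finset σ) (c : R) :
    aeval (fun _ => (Polynomial.X : Polynomial R)) (monomial A.val.toFinsupp c)
      = Polynomial.C c * Polynomial.X ^ A.card := by
  rw [aeval_monomial, Polynomial.algebraMap_eq, Finsupp.prod, Finset.prod_pow_eq_pow_sum]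
  congr 2
  exact Multiset.toFinsupp_sum_eq A.val

end MvPolynomial

open MvPolynomial

theorem pderivFinset_monomial_toFinsupp_val {n : ℕ} (S A : Finset (Fin n)) (c : ℝ) :
    pderivFinset S (monomial A.val.toFinsupp c)
      = if S ⊆ A then monomial (A \ S).val.toFinsupp c else 0 := by
  rw [pderivFinset, foldl_pderiv_monomial_toFinsupp_val _ _ (S.sort_nodup _), S.sort_toFinset]

theorem pderivFinset_sum {n : ℕ} {ι : Type*} (S : Finset (Fin n)) (s : Finset ι)
    (f : ι → MvPolynomial (Fin n) ℝ) :
    pderivFinset S (∑ i ∈ s, f i) = ∑ i ∈ s, pderivFinset S (f i) := by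
  simp only [pderivFinset, foldl_pderiv_eq_prod, map_sum]

theorem iterate_derivative_aeval_const_X_monomial_toFinsupp_val {n : ℕ} (A : Finset (Fin n))
    (c : ℝ) (k : ℕ) :
    Polynomial.derivative^[k] (aeval (fun _ => Polynomial.X) (monomial A.val.toFinsupp c))
      = Polynomial.C (k.factorial : ℝ)
          * ∑ S ∈ univ.filter (fun S : Finset (Fin n) => S.card = k),
              aeval (fun _ => Polynomial.X) (pderivFinset S (monomial A.val.toFinsupp c)) := by
  have hterm : ∀ S ∈ univ.filter (fun S : Finset (Fin n) => S.card = k),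
      aeval (fun _ => Polynomial.X) (pderivFinset S (monomial A.val.toFinsupp c))
        = if S ⊆ A then Polynomial.C c * Polynomial.X ^ (A.card - k) else 0 := by
    intro S hS
    rw [pderivFinset_monomial_toFinsupp_val]
    split_ifs with hSA
    · rw [aeval_const_X_monomial_toFinsupp_val, Finset.card_sdiff_of_subset hSA,
        (Finset.mem_filter.mp hS).2]
    · exact map_zero _
  have hcount : (univ.filter fun S : Finset (Fin n) => S.card = k).filter (· ⊆ A)
      = A.powersetCard k := by
    ext S
    simp [Finset.mem_powersetCard, and_comm]
  rw [Finset.sum_congr rfl hterm, ← Finset.sum_filter, hcount, Finset.sum_const,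
    Finset.card_powersetCard, aeval_const_X_monomial_toFinsupp_val,
    Polynomial.iterate_derivative_C_mul, Polynomial.iterate_derivative_X_pow_eq_C_mul,
    Nat.descFactorial_eq_factorial_mul_choose, nsmul_eq_mul]
  simp only [Nat.cast_mul, map_mul, Polynomial.C_eq_natCast]
  ring

theorem iterate_derivative_aeval_const_X_of_multilinear {n : ℕ} (g : MvPolynomial (Fin n) ℝ)
    (hg : ∀ m ∈ g.support, ∀ i, m i ≤ 1) (k : ℕ) :
    Polynomial.derivative^[k] (aeval (fun _ => Polynomial.X) g)
      = Polynomial.C (k.factorial : ℝ)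
          * ∑ S ∈ univ.filter (fun S : Finset (Fin n) => S.card = k),
              aeval (fun _ => Polynomial.X) (pderivFinset S g) := by
  have hmonomial : ∀ m ∈ g.support, monomial m (coeff m g)
      = monomial m.support.val.toFinsupp (coeff m g) := fun m hm =>
    congrArg (fun e => monomial e (coeff m g)) (Finsupp.eq_toFinsupp_support_val (hg m hm))
  calc Polynomial.derivative^[k] (aeval (fun _ => Polynomial.X) g)
      = ∑ m ∈ g.support, Polynomial.derivative^[k]
          (aeval (fun _ => Polynomial.X) (monomial m (coeff m g))) := by
        conv_lhs => rw [← g.support_sum_monomial_coeff]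
        rw [map_sum, Polynomial.iterate_derivative_sum]
    _ = ∑ m ∈ g.support, Polynomial.C (k.factorial : ℝ)
          * ∑ S ∈ univ.filter (fun S : Finset (Fin n) => S.card = k),
              aeval (fun _ => Polynomial.X) (pderivFinset S (monomial m (coeff m g))) :=
        Finset.sum_congr rfl fun m hm => by
          rw [hmonomial m hm, iterate_derivative_aeval_const_X_monomial_toFinsupp_val]
    _ = _ := by
        rw [← Finset.mul_sum, Finset.sum_comm]
        simp only [← map_sum, ← pderivFinset_sum, g.support_sum_monomial_coeff]

/-- If `g ∈ ℝ[t_1,…,t_n]` is multilinear and `h(t) = g(t,…,t)`, then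
`d^k/dt^k h(t) = k! · Σ_{|S| = k} (∂^k/∂t_S g)(t,…,t)`. -/
theorem stmt7 {n : ℕ} (g : MvPolynomial (Fin n) ℝ)
    (hml : ∀ m ∈ g.support, ∀ i, m i ≤ 1) (k : ℕ) (t : ℝ) :
    iteratedDeriv k (fun u : ℝ => MvPolynomial.eval (fun _ : Fin n => u) g) t
      = (k.factorial : ℝ)
          * ∑ S ∈ univ.filter (fun S : Finset (Fin n) => S.card = k),
              MvPolynomial.eval (fun _ : Fin n => t) (pderivFinset S g) := by
  simp only [← polynomial_eval_aeval_const_X, Polynomial.iteratedDeriv_eval,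
    iterate_derivative_aeval_const_X_of_multilinear g hml, Polynomial.eval_mul,
    Polynomial.eval_C, Polynomial.eval_finsetSum]
end
end

section
/- Let f : {−1,1}^n → {−1,1} be non-constant. Then the set {r⃗ ∈ (−1,1)^n : f̂({i}, r⃗) = 0 for all i ∈ [n]} has n-dimensional Lebesgue measure zero. -/
/-!
Up to the positive factor `√(1 - rᵢ²)`, the coefficient `f̂({i}, r)` is a polynomial `Pᵢ(r)` in the
bias vector. A non-constant `f` has an edge `z[i ↦ 1]`, `z[i ↦ -1]` on which it changes value;
evaluating `Pᵢ` at the point with `rᵢ = 0` and `rⱼ = zⱼ` otherwise picks out exactly these two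
vertices and gives half the jump of `f`, so `Pᵢ ≠ 0`. The zero set of a nonzero real polynomial
is Lebesgue-null (induction on the number of variables via Fubini), and it contains the set in
question.
-/


open Finset

noncomputable section

open MeasureTheory

theorem volume_eq_zero_of_ae_volume_setOf_cons_eq_zero {n : ℕ} {S : Set (Fin (n + 1) → ℝ)}
    (hS : MeasurableSet S) (h : ∀ᵐ s : Fin n → ℝ, volume {y : ℝ | Fin.cons y s ∈ S} = 0) :
    volume S = 0 := by
  let E := (MeasurableEquiv.piFinSuccAbove (fun _ : Fin (n + 1) => ℝ) 0).trans
    MeasurableEquiv.prodComm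
  have hE : MeasurePreserving E volume ((volume : Measure (Fin n → ℝ)).prod volume) :=
    (volume_preserving_piFinSuccAbove (fun _ : Fin (n + 1) => ℝ) 0).trans
      (by rw [Measure.volume_eq_prod]; exact Measure.measurePreserving_swap)
  rw [← hE.symm.measure_preimage_equiv, Measure.measure_prod_null (E.symm.measurable hS)]
  filter_upwards [h] with s hs
  rw [Pi.zero_apply, ← hs]
  congr 1
  ext y
  simp [E, Fin.consEquiv, MeasurableEquiv.prodComm]

namespace MvPolynomial

theorem finite_setOf_eval_cons_eq_zero {R : Type*} [CommRing R] [IsDomain R] {n : ℕ}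
    {p : MvPolynomial (Fin (n + 1)) R} {s : Fin n → R}
    (hs : eval s (finSuccEquiv R n p).leadingCoeff ≠ 0) :
    {y : R | eval (Fin.cons y s) p = 0}.Finite := by
  have hq : (finSuccEquiv R n p).map (eval s) ≠ 0 := fun h =>
    hs (by simpa using congrArg (·.coeff (finSuccEquiv R n p).natDegree) h)
  simpa only [eval_eq_eval_mv_eval', Polynomial.IsRoot.def] using
    Polynomial.finite_setOfPred_isRoot hq

theorem volume_setOf_eval_eq_zero {n : ℕ} {p : MvPolynomial (Fin n) ℝ} (hp : p ≠ 0) :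
    volume {r : Fin n → ℝ | eval r p = 0} = 0 := by
  induction n with
  | zero =>
    obtain ⟨c, rfl⟩ := C_surjective (Fin 0) p
    simp_all
  | succ n ih =>
    have hlead : (finSuccEquiv ℝ n p).leadingCoeff ≠ 0 := by simpa using hp
    refine volume_eq_zero_of_ae_volume_setOf_cons_eq_zero
      ((continuous_eval p).measurable (measurableSet_singleton 0)) ?_
    filter_upwards [measure_eq_zero_iff_ae_notMem.mp (ih hlead)] with s hs
    exact (finite_setOf_eval_cons_eq_zero hs).measure_zero _

end MvPolynomial

theorem exists_update_ne_of_ne {ι α β : Type*} [Fintype ι] [DecidableEq ι]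
    {f : (ι → α) → β} {x y : ι → α} (hxy : f x ≠ f y) :
    ∃ i z a, f (Function.update z i a) ≠ f z := by
  by_contra! h
  have key (s : Finset ι) : f (s.piecewise y x) = f x := by
    induction s using Finset.induction with
    | empty => simp
    | insert i s _ ih => rw [Finset.piecewise_insert, h, ih]
  exact hxy (by simpa using (key univ).symm)

theorem exists_update_true_ne_update_false {ι β : Type*} [Fintype ι] [DecidableEq ι]
    {f : (ι → Bool) → β} {x y : ι → Bool} (hxy : f x ≠ f y) :
    ∃ i z, f (Function.update z i true) ≠ f (Function.update z i false) := by
  obtain ⟨i, z, a, h⟩ := exists_update_ne_of_ne hxy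
  refine ⟨i, z, ?_⟩
  have hz := Function.update_eq_self i z
  cases a <;> cases hzi : z i <;> rw [hzi] at hz <;> rw [hz] at * <;> tauto

lemma pmVal_mul_pmVal_add_one_div_two (a b : Bool) :
    (1 + pmVal a * pmVal b) / 2 = if b = a then 1 else 0 := by
  cases a <;> cases b <;> norm_num [pmVal]

open MvPolynomial in
/-- `√(1 - rᵢ²) · f̂({i}, r)`, a polynomial in the bias vector `r`. -/
def singletonFourierPoly {n : ℕ} (f : (Fin n → Bool) → ℝ) (i : Fin n) :
    MvPolynomial (Fin n) ℝ :=
  ∑ x : Fin n → Bool,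
    (∏ j, (1 + X j * C (pmVal (x j))) * C 2⁻¹) * C (f x) * (C (pmVal (x i)) - X i)

lemma eval_singletonFourierPoly {n : ℕ} (f : (Fin n → Bool) → ℝ) (i : Fin n) (r : Fin n → ℝ) :
    MvPolynomial.eval r (singletonFourierPoly f i) =
      ∑ x : Fin n → Bool, cubeWt r x * f x * (pmVal (x i) - r i) := by
  simp only [singletonFourierPoly, cubeWt, map_sum, map_mul, map_prod, map_add, map_sub, map_one,
    MvPolynomial.eval_C, MvPolynomial.eval_X, div_eq_mul_inv]

lemma biasedFourier_singleton {n : ℕ} (f : (Fin n → Bool) → ℝ) (i : Fin n) (r : Fin n → ℝ) :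
    biasedFourier r f {i} =
      MvPolynomial.eval r (singletonFourierPoly f i) / Real.sqrt (1 - r i ^ 2) := by
  simp only [eval_singletonFourierPoly, biasedFourier, biasedExp, biasedChi, prod_singleton,
    sum_div]
  congr! 1 with x
  ring

lemma cubeWt_update_pmVal {n : ℕ} (z : Fin n → Bool) (i : Fin n) (x : Fin n → Bool) :
    cubeWt (Function.update (fun j => pmVal (z j)) i 0) x =
      if x = Function.update z i (x i) then 1 / 2 else 0 := by
  have hfac : ∀ j ∈ univ.erase i,
      (1 + Function.update (fun j => pmVal (z j)) i 0 j * pmVal (x j)) / 2 =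
        if x j = z j then 1 else 0 := fun j hj => by
    rw [Function.update_of_ne (ne_of_mem_erase hj), pmVal_mul_pmVal_add_one_div_two]
  rw [cubeWt, ← mul_prod_erase _ _ (mem_univ i), prod_congr rfl hfac, prod_boole,
    Function.update_self]
  simp [Function.eq_update_iff]

lemma eval_singletonFourierPoly_update {n : ℕ} (f : (Fin n → Bool) → ℝ) (i : Fin n)
    (z : Fin n → Bool) :
    MvPolynomial.eval (Function.update (fun j => pmVal (z j)) i 0) (singletonFourierPoly f i) =
      (f (Function.update z i true) - f (Function.update z i false)) / 2 := by
  have hne : Function.update z i true ≠ Function.update z i false := fun h => by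
    simpa using congrFun h i
  rw [eval_singletonFourierPoly, Fintype.sum_eq_add _ _ hne]
  · rw [cubeWt_update_pmVal, cubeWt_update_pmVal, if_pos (by simp), if_pos (by simp)]
    simp only [Function.update_self, pmVal, if_true, Bool.false_eq_true, if_false]
    ring
  · rintro x ⟨ht, hf⟩
    rw [cubeWt_update_pmVal, if_neg]
    · simp
    · cases x i <;> assumption

lemma singletonFourierPoly_ne_zero {n : ℕ} {f : (Fin n → Bool) → ℝ} {i : Fin n}
    {z : Fin n → Bool} (h : f (Function.update z i true) ≠ f (Function.update z i false)) :
    singletonFourierPoly f i ≠ 0 := fun h0 => h <| by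
  have := eval_singletonFourierPoly_update f i z
  rw [h0, map_zero] at this
  linarith

theorem stmt17_general {n : ℕ} (f : (Fin n → Bool) → ℝ)
    (hnc : ∃ x y, f x ≠ f y) :
    MeasureTheory.volume
      {r : Fin n → ℝ | (∀ i, r i ∈ Set.Ioo (-1 : ℝ) 1) ∧
        ∀ i : Fin n, biasedFourier r f {i} = 0} = 0 := by
  obtain ⟨x, y, hxy⟩ := hnc
  obtain ⟨i, z, hedge⟩ := exists_update_true_ne_update_false hxy
  refine MeasureTheory.measure_mono_null (fun r ⟨hr, hf⟩ => ?_)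
    (MvPolynomial.volume_setOf_eval_eq_zero (singletonFourierPoly_ne_zero hedge))
  have hσ : Real.sqrt (1 - r i ^ 2) ≠ 0 :=
    Real.sqrt_ne_zero'.mpr (by nlinarith [(hr i).1, (hr i).2])
  have hi := hf i
  rw [biasedFourier_singleton, div_eq_zero_iff] at hi
  exact hi.resolve_right hσ

/-- For a non-constant `f : {-1,1}^n → {-1,1}`, the set of bias
vectors `r⃗ ∈ (-1,1)^n` at which all first-level Fourier coefficients vanish has
`n`-dimensional Lebesgue measure zero. -/
theorem stmt17 {n : ℕ} (f : (Fin n → Bool) → ℝ)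
    (hpm : ∀ x, f x = 1 ∨ f x = -1)
    (hnc : ∃ x y, f x ≠ f y) :
    MeasureTheory.volume
      {r : Fin n → ℝ | (∀ i, r i ∈ Set.Ioo (-1 : ℝ) 1) ∧
        ∀ i : Fin n, biasedFourier r f {i} = 0} = 0 :=
  stmt17_general f hnc
end
end

section
/- For every fixed k ∈ ℕ, the set of biases {r ∈ (−1,1) : there exist n ∈ ℕ and a non-constant k-junta f : {−1,1}^n → {−1,1} with f̂({i}, r) = 0 for all i ∈ [n]} is finite. -/
open Finset

noncomputable section

/-- `f` is a `k`-junta: it depends on at most `k` coordinates. -/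
def IsJunta {n : ℕ} (f : (Fin n → Bool) → ℝ) (k : ℕ) : Prop :=
  ∃ J : Finset (Fin n), J.card ≤ k ∧ ∀ x y, (∀ i ∈ J, x i = y i) → f x = f y

section Aux
open Polynomial

def wFactor (s : ℝ) : Polynomial ℝ := C (1/2) * (1 + C s * X)

def wtP {n : ℕ} (x : Fin n → Bool) : Polynomial ℝ := ∏ i, wFactor (pmVal (x i))

def qP {n : ℕ} (f : (Fin n → Bool) → ℝ) (i : Fin n) : Polynomial ℝ :=
  ∑ x : Fin n → Bool, C (f x) * (wtP x * (C (pmVal (x i)) - X))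

def hP {n : ℕ} (f : (Fin n → Bool) → ℝ) : Polynomial ℝ :=
  ∑ x : Fin n → Bool, C (f x) * wtP x

lemma pmVal_mul_self (b : Bool) : pmVal b * pmVal b = 1 := by
  cases b <;> norm_num [pmVal]

theorem derivF {ι : Type*} [DecidableEq ι] (s : Finset ι) (f : ι → Polynomial ℝ) :
    derivative (∏ i ∈ s, f i) = ∑ i ∈ s, (∏ j ∈ s.erase i, f j) * derivative (f i) := by
  induction s using Finset.induction_on with
  | empty => simp
  | @insert a s ha ih =>
    have hterm : ∀ i ∈ s, (∏ j ∈ (insert a s).erase i, f j) * derivative (f i)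
        = f a * ((∏ j ∈ s.erase i, f j) * derivative (f i)) := by
      intro i hi
      rw [Finset.erase_insert_of_ne (fun h : a = i => ha (by rw [h]; exact hi)),
          Finset.prod_insert (fun h => ha (Finset.mem_of_mem_erase h))]
      ring
    rw [Finset.prod_insert ha, derivative_mul, ih, Finset.sum_insert ha,
        Finset.erase_insert ha, Finset.sum_congr rfl hterm, ← Finset.mul_sum]
    ring

lemma wFactor_mul (b : Bool) :
    wFactor (pmVal b) * (C (pmVal b) - X) = C (1/2) * C (pmVal b) * (1 - X ^ 2) := by
  have h : C (pmVal b) * C (pmVal b) = 1 := by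
    rw [← C_mul, pmVal_mul_self, C_1]
  unfold wFactor
  linear_combination (C ((1:ℝ)/2) * X) * h

lemma derivative_wFactor (s : ℝ) : (wFactor s).derivative = C (1/2) * C s := by
  unfold wFactor
  simp

lemma sum_wtP_mul {n : ℕ} (x : Fin n → Bool) :
    ∑ i, wtP x * (C (pmVal (x i)) - X) = (1 - X ^ 2) * (wtP x).derivative := by
  unfold wtP
  rw [derivF, Finset.mul_sum]
  refine Finset.sum_congr rfl fun i _ => ?_
  rw [← Finset.mul_prod_erase Finset.univ (fun j => wFactor (pmVal (x j))) (Finset.mem_univ i),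
      derivative_wFactor, mul_comm (wFactor (pmVal (x i))), mul_assoc, wFactor_mul]
  ring

lemma sum_qP {n : ℕ} (f : (Fin n → Bool) → ℝ) :
    ∑ i, qP f i = (1 - X ^ 2) * (hP f).derivative := by
  unfold qP hP
  rw [Finset.sum_comm, derivative_sum, Finset.mul_sum]
  refine Finset.sum_congr rfl fun x _ => ?_
  rw [← Finset.mul_sum, sum_wtP_mul, derivative_mul, derivative_C, zero_mul, zero_add]
  ring

lemma eval_wtP {n : ℕ} (x : Fin n → Bool) (r : ℝ) :
    (wtP x).eval r = cubeWt (fun _ => r) x := by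
  unfold wtP cubeWt
  rw [eval_prod]
  refine Finset.prod_congr rfl fun i _ => ?_
  simp [wFactor]
  ring

lemma eval_qP {n : ℕ} (f : (Fin n → Bool) → ℝ) (i : Fin n) (r : ℝ) :
    (qP f i).eval r = ∑ x : Fin n → Bool, cubeWt (fun _ => r) x * (f x * (pmVal (x i) - r)) := by
  unfold qP
  rw [eval_finset_sum]
  refine Finset.sum_congr rfl fun x _ => ?_
  simp [eval_wtP]
  ring

lemma eval_one_hP {m : ℕ} (f : (Fin m → Bool) → ℝ) :
    (hP f).eval 1 = f (fun _ => true) := by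
  unfold hP wtP
  rw [eval_finset_sum]
  have hterm : ∀ y : Fin m → Bool, (C (f y) * ∏ i, wFactor (pmVal (y i))).eval 1
      = if y = (fun _ => true) then f y else 0 := by
    intro y
    rw [eval_mul, eval_C, eval_prod]
    have hf : ∀ i, (wFactor (pmVal (y i))).eval 1 = if y i = true then 1 else 0 := by
      intro i; cases hyi : y i <;> simp [wFactor, pmVal, hyi] <;> norm_num
    rw [Finset.prod_congr rfl fun i _ => hf i, Finset.prod_boole]
    by_cases hy : y = fun _ => true
    · have : ∀ i, y i = true := fun i => by rw [hy]
      simp [hy, this]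
    · have : ¬ ∀ i, y i = true := fun hh => hy (funext hh)
      simp [hy, this]
  rw [Finset.sum_congr rfl fun y _ => hterm y,
      Finset.sum_ite_eq' Finset.univ (fun _ => true) f]
  simp

lemma eval_zero_hP {m : ℕ} (f : (Fin m → Bool) → ℝ) :
    (hP f).eval 0 = ∑ y : Fin m → Bool, f y * (1/2) ^ m := by
  unfold hP wtP
  rw [eval_finset_sum]
  refine Finset.sum_congr rfl fun y _ => ?_
  rw [eval_mul, eval_C, eval_prod]
  have hf : ∀ i ∈ Finset.univ, (wFactor (pmVal (y i))).eval 0 = (1:ℝ)/2 := by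
    intro i _; simp [wFactor]
  rw [Finset.prod_congr rfl hf, Finset.prod_const]
  simp

lemma key {m : ℕ} (g : (Fin m → Bool) → Bool) (hnc : ∃ y z, g y ≠ g z) :
    ∃ j, qP (fun y => pmVal (g y)) j ≠ 0 := by
  by_contra h
  push_neg at h
  set F : (Fin m → Bool) → ℝ := fun y => pmVal (g y) with hF
  have hsum : (1 - X ^ 2 : Polynomial ℝ) * (hP F).derivative = 0 := by
    rw [← sum_qP]; exact Finset.sum_eq_zero fun j _ => h j
  have hXne : (1 - X ^ 2 : Polynomial ℝ) ≠ 0 := fun hh => by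
    have := congrArg (Polynomial.eval 0) hh; simp at this
  have hd : (hP F).derivative = 0 := by
    rcases mul_eq_zero.1 hsum with h1 | h1
    · exact absurd h1 hXne
    · exact h1
  have hC : hP F = C ((hP F).coeff 0) :=
    Polynomial.eq_C_of_natDegree_eq_zero (Polynomial.natDegree_eq_zero_of_derivative_eq_zero hd)
  have heq : F (fun _ => true) = ∑ y : Fin m → Bool, F y * (1/2) ^ m := by
    have h1 := eval_one_hP F
    have h0 := eval_zero_hP F
    rw [hC, eval_C] at h1 h0
    exact h1.symm.trans h0
  have hhalfpos : (0:ℝ) < (1/2) ^ m := by positivity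
  have hcard : ∑ _y : Fin m → Bool, ((1:ℝ)/2) ^ m = 1 := by
    rw [Finset.sum_const, Finset.card_univ]
    simp only [Fintype.card_fun, Fintype.card_bool, Fintype.card_fin, nsmul_eq_mul]
    push_cast
    rw [← mul_pow]
    norm_num
  obtain ⟨y0, z0, hyz⟩ := hnc
  cases ha : g (fun _ => true) with
  | true =>
    have hlt : ∑ y : Fin m → Bool, F y * (1/2) ^ m < ∑ _y : Fin m → Bool, ((1:ℝ)/2) ^ m := by
      obtain ⟨w, hw⟩ : ∃ w, g w = false := by
        cases h1 : g y0
        · exact ⟨y0, h1⟩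
        · cases h2 : g z0
          · exact ⟨z0, h2⟩
          · exact absurd (h1.trans h2.symm) hyz
      refine Finset.sum_lt_sum (fun y _ => ?_) ⟨w, Finset.mem_univ w, ?_⟩
      · have : F y ≤ 1 := by cases hgy : g y <;> simp [hF, pmVal, hgy]
        nlinarith
      · have : F w = -1 := by simp [hF, pmVal, hw]
        rw [this]; nlinarith
    rw [← heq, hcard] at hlt
    simp [hF, pmVal, ha] at hlt
  | false =>
    have hlt : ∑ _y : Fin m → Bool, (-((1:ℝ)/2) ^ m) < ∑ y : Fin m → Bool, F y * (1/2) ^ m := by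
      obtain ⟨w, hw⟩ : ∃ w, g w = true := by
        cases h1 : g y0
        · cases h2 : g z0
          · exact absurd (h1.trans h2.symm) hyz
          · exact ⟨z0, h2⟩
        · exact ⟨y0, h1⟩
      refine Finset.sum_lt_sum (fun y _ => ?_) ⟨w, Finset.mem_univ w, ?_⟩
      · have : -1 ≤ F y := by cases hgy : g y <;> simp [hF, pmVal, hgy]
        nlinarith
      · have : F w = 1 := by simp [hF, pmVal, hw]
        rw [this]; nlinarith
    have hcard' : ∑ _y : Fin m → Bool, (-((1:ℝ)/2) ^ m) = -1 := by
      rw [Finset.sum_const, Finset.card_univ]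
      simp only [Fintype.card_fun, Fintype.card_bool, Fintype.card_fin, nsmul_eq_mul]
      push_cast
      rw [mul_neg, ← mul_pow]
      norm_num
    rw [← heq, hcard'] at hlt
    simp [hF, pmVal, ha] at hlt

lemma marginal {n m : ℕ} (r : ℝ) (p : Fin n → Prop) [DecidablePred p] (e : Fin m ≃ {i : Fin n // p i})
    (G : (Fin m → Bool) → ℝ) :
    ∑ x : Fin n → Bool, cubeWt (fun _ => r) x * G (fun j => x (e j)) =
      ∑ y : Fin m → Bool, cubeWt (fun _ => r) y * G y := by
  classical
  set w : Bool → ℝ := fun b => (1 + r * pmVal b) / 2 with hw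
  have hcube : ∀ {N : ℕ} (x : Fin N → Bool), cubeWt (fun _ => r) x = ∏ i, w (x i) := by
    intro N x; rfl
  set E := (Equiv.piEquivPiSubtypeProd (fun i : Fin n => p i) (fun _ => Bool)) with hE
  rw [← Equiv.sum_comp E.symm
    (fun x : Fin n → Bool => cubeWt (fun _ => r) x * G fun j => x (e j)),
    Fintype.sum_prod_type]
  have hsplit : ∀ (a : {i : Fin n // p i} → Bool) (b : {i : Fin n // ¬ p i} → Bool),
      cubeWt (fun _ => r) (E.symm (a, b)) =
      (∏ i : {i : Fin n // p i}, w (a i)) * ∏ i : {i : Fin n // ¬ p i}, w (b i) := by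
    intro a b
    rw [hcube, ← Fintype.prod_subtype_mul_prod_subtype (fun i : Fin n => p i)
      (fun i => w (E.symm (a, b) i))]
    congr 1
    · refine Finset.prod_congr rfl fun i _ => ?_
      congr 1
      simp [hE, Equiv.piEquivPiSubtypeProd_symm_apply, i.2]
    · refine Finset.prod_congr rfl fun i _ => ?_
      congr 1
      simp [hE, Equiv.piEquivPiSubtypeProd_symm_apply, i.2]
  have hG : ∀ (a : {i : Fin n // p i} → Bool) (b : {i : Fin n // ¬ p i} → Bool),
      G (fun j => E.symm (a, b) (e j)) = G (fun j => a (e j)) := by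
    intro a b
    congr 1
    funext j
    simp [hE, Equiv.piEquivPiSubtypeProd_symm_apply, (e j).2]
  have hone : ∑ b : {i : Fin n // ¬ p i} → Bool, ∏ i, w (b i) = 1 := by
    have h2 := Finset.prod_univ_sum (fun _ : {i : Fin n // ¬ p i} => (Finset.univ : Finset Bool))
      (fun _ c => w c)
    rw [Fintype.piFinset_univ] at h2
    rw [← h2]
    have : ∀ i : {i : Fin n // ¬ p i}, ∑ c : Bool, w c = 1 := by
      intro i
      simp [hw, pmVal]
      ring
    rw [Finset.prod_congr rfl fun i _ => this i, Finset.prod_const_one]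
  have hstep : ∀ a : {i : Fin n // p i} → Bool,
      (∑ b : {i : Fin n // ¬ p i} → Bool,
        cubeWt (fun _ => r) (E.symm (a, b)) * G (fun j => E.symm (a, b) (e j)))
      = (∏ i : {i : Fin n // p i}, w (a i)) * G (fun j => a (e j)) := by
    intro a
    have : ∀ b : {i : Fin n // ¬ p i} → Bool,
        cubeWt (fun _ => r) (E.symm (a, b)) * G (fun j => E.symm (a, b) (e j))
        = ((∏ i : {i : Fin n // p i}, w (a i)) * G (fun j => a (e j))) * ∏ i, w (b i) := by
      intro b
      rw [hsplit, hG]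
      ring
    rw [Finset.sum_congr rfl fun b _ => this b, ← Finset.mul_sum, hone, mul_one]
  rw [Finset.sum_congr rfl fun a _ => hstep a]
  rw [← Equiv.sum_comp (Equiv.arrowCongr e (Equiv.refl Bool))
    (fun a : {i : Fin n // p i} → Bool => (∏ i, w (a i)) * G (fun j => a (e j)))]
  refine Finset.sum_congr rfl fun y _ => ?_
  have h1 : (∏ i : {i : Fin n // p i}, w ((Equiv.arrowCongr e (Equiv.refl Bool)) y i))
      = ∏ j : Fin m, w (y j) := by
    rw [← Equiv.prod_comp e (fun i : {i : Fin n // p i} =>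
      w ((Equiv.arrowCongr e (Equiv.refl Bool)) y i))]
    refine Finset.prod_congr rfl fun j _ => ?_
    simp
  rw [h1, hcube]
  congr 1
  congr 1
  funext j
  simp

end Aux

section Main
open Polynomial

lemma qP_fourier {n : ℕ} (f : (Fin n → Bool) → ℝ) (i : Fin n) {r : ℝ}
    (hr : r ∈ Set.Ioo (-1 : ℝ) 1) :
    (qP f i).eval r = Real.sqrt (1 - r ^ 2) * biasedFourier (fun _ => r) f {i} := by
  have h1 : (0:ℝ) < 1 - r ^ 2 := by nlinarith [hr.1, hr.2]
  have hs : Real.sqrt (1 - r ^ 2) ≠ 0 := ne_of_gt (Real.sqrt_pos.2 h1)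
  rw [eval_qP, biasedFourier, biasedExp, Finset.mul_sum]
  refine Finset.sum_congr rfl fun x _ => ?_
  simp only [biasedChi, Finset.prod_singleton]
  field_simp

end Main

/-- For every fixed `k`, the set of critical biases — those
`r ∈ (-1,1)` for which some non-constant `k`-junta (on any number `n` of variables)
has all its first-level `r`-biased Fourier coefficients equal to zero — is finite. -/
theorem stmt18 (k : ℕ) :
    {r : ℝ | r ∈ Set.Ioo (-1 : ℝ) 1 ∧
      ∃ (n : ℕ) (f : (Fin n → Bool) → ℝ),
        (∀ x, f x = 1 ∨ f x = -1) ∧ (∃ x y, f x ≠ f y) ∧ IsJunta f k ∧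
        ∀ i : Fin n, biasedFourier (fun _ => r) f {i} = 0}.Finite := by
  classical
  have hcover : {r : ℝ | r ∈ Set.Ioo (-1 : ℝ) 1 ∧
      ∃ (n : ℕ) (f : (Fin n → Bool) → ℝ),
        (∀ x, f x = 1 ∨ f x = -1) ∧ (∃ x y, f x ≠ f y) ∧ IsJunta f k ∧
        ∀ i : Fin n, biasedFourier (fun _ => r) f {i} = 0} ⊆
      ⋃ (m : Fin (k+1)), ⋃ (g : (Fin (m : ℕ) → Bool) → Bool),
        {r : ℝ | (∃ y z, g y ≠ g z) ∧ ∀ j, (qP (fun y => pmVal (g y)) j).eval r = 0} := by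
    rintro r ⟨hr, n, f, hbool, ⟨x0, y0, hxy⟩, ⟨J, hJk, hJ⟩, hzero⟩
    have hmk : J.card < k + 1 := Nat.lt_succ_of_le hJk
    obtain ⟨e, -⟩ : ∃ e : Fin J.card ≃ {i : Fin n // i ∈ J},
        e = (J.orderIsoOfFin rfl).toEquiv := ⟨_, rfl⟩
    obtain ⟨lift, hliftdef⟩ : ∃ lift : (Fin J.card → Bool) → (Fin n → Bool),
        lift = fun y i => if h : i ∈ J then y (e.symm ⟨i, h⟩) else true := ⟨_, rfl⟩
    have hlift : ∀ x : Fin n → Bool, f (lift (fun j => x (e j))) = f x := by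
      intro x
      apply hJ
      intro i hi
      have h2 : lift (fun j => x (e j)) i = x (e (e.symm ⟨i, hi⟩)) := by
        rw [hliftdef]; simp [dif_pos hi]
      rw [h2, Equiv.apply_symm_apply]
    obtain ⟨g, hgdef⟩ : ∃ g : (Fin J.card → Bool) → Bool,
        g = fun y => if f (lift y) = 1 then true else false := ⟨_, rfl⟩
    have hg : ∀ y, pmVal (g y) = f (lift y) := by
      intro y
      rw [hgdef]
      rcases hbool (lift y) with h | h <;> norm_num [h, pmVal]
    refine Set.mem_iUnion.2 ⟨⟨J.card, hmk⟩, Set.mem_iUnion.2 ⟨g, ⟨?_, ?_⟩⟩⟩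
    · show ∃ y z : Fin J.card → Bool, g y ≠ g z
      refine ⟨fun j => x0 (e j), fun j => y0 (e j), fun hgg => hxy ?_⟩
      have e1 : pmVal (g fun j => x0 (e j)) = f x0 := by
        rw [hg]; exact hlift x0
      have e2 : pmVal (g fun j => y0 (e j)) = f y0 := by rw [hg]; exact hlift y0
      calc f x0 = pmVal (g fun j => x0 (e j)) := e1.symm
        _ = pmVal (g fun j => y0 (e j)) := by rw [hgg]
        _ = f y0 := e2
    · show ∀ j : Fin J.card, (qP (fun y => pmVal (g y)) j).eval r = 0
      intro j
      have hm := marginal r (fun i : Fin n => i ∈ J) e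
        (fun y => pmVal (g y) * (pmVal (y j) - r))
      rw [eval_qP]
      calc ∑ y : Fin J.card → Bool, cubeWt (fun _ => r) y * (pmVal (g y) * (pmVal (y j) - r))
          = ∑ x : Fin n → Bool, cubeWt (fun _ => r) x *
              (pmVal (g (fun j' => x (e j'))) * (pmVal (x (e j)) - r)) := hm.symm
        _ = ∑ x : Fin n → Bool,
              cubeWt (fun _ => r) x * (f x * (pmVal (x ((e j) : Fin n)) - r)) := by
            refine Finset.sum_congr rfl fun x _ => ?_
            simp only [hg, hlift]
        _ = (qP f ((e j) : Fin n)).eval r := (eval_qP f _ r).symm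
        _ = Real.sqrt (1 - r^2) * biasedFourier (fun _ => r) f {((e j) : Fin n)} :=
            qP_fourier f _ hr
        _ = 0 := by rw [hzero]; ring
  refine Set.Finite.subset (Set.finite_iUnion fun m => Set.finite_iUnion fun g => ?_) hcover
  by_cases hc : ∃ y z, g y ≠ g z
  · obtain ⟨j, hj⟩ := key g hc
    refine (Polynomial.finite_setOf_isRoot hj).subset fun r hrr => ?_
    simpa [Polynomial.IsRoot] using hrr.2 j
  · exact Set.Finite.subset Set.finite_empty fun r hrr => absurd hrr.1 hc
end
end
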